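/- arXiv:2605.07080 — 3 statements merged into one kernel-verified Lean document; each statement's English description precedes it below -/
import Mathlib

section
/- Upper bound on cumulative allocation under GPA: for any threshold vector γ_1,…,γ_n with γ_i ∈ [0,1], let ℓ be the allocation produced by the GPA policy. Then for every site i ∈ {1,…,n} and every time step t ∈ {0,1,…,T}, the cumulative allocation satisfies L_i^t ≤ γ_i·D_i^t + b_i + c_i; in particular the total allocation satisfies L_i ≤ γ_i·D_i + b_i + c_i. -/
open Finset

/-- `stock b d ℓ t` is the post-replenishment stock `k^{t+1}` at a single site
(with `stock b d ℓ 0 = k^1 = b`), under demands `d` and allocations `ℓ`. -/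
noncomputable def stock (b : ℕ) (d : ℕ → ℕ) (ℓ : ℕ → ℝ) : ℕ → ℝ
  | 0 => (b : ℝ)
  | t + 1 => max (stock b d ℓ t - (d (t + 1) : ℝ)) 0 + ℓ (t + 1)

/-- Sitewise transport cost `Σ_{t=1}^T w_i ⌈ℓ_i^t / c_i⌉`. -/
noncomputable def transportCost (T : ℕ) (wi : ℝ) (ci : ℕ) (ℓ : ℕ → ℝ) : ℝ :=
  ∑ t ∈ Icc 1 T, wi * (⌈ℓ t / (ci : ℝ)⌉ : ℝ)

/-- Sitewise lost-sales penalty `Σ_{t=1}^T p (d_i^t − k_i^t)_+`. -/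
noncomputable def penaltyCost (T : ℕ) (p : ℝ) (b : ℕ) (d : ℕ → ℕ) (ℓ : ℕ → ℝ) : ℝ :=
  ∑ t ∈ Icc 1 T, p * max ((d t : ℝ) - stock b d ℓ (t - 1)) 0

/-- Total cost of an allocation. -/
noncomputable def totalCost {n : ℕ} (T : ℕ) (w : Fin n → ℝ) (c b : Fin n → ℕ)
    (p : ℝ) (d : Fin n → ℕ → ℕ) (ℓ : Fin n → ℕ → ℝ) : ℝ :=
  ∑ i, (transportCost T (w i) (c i) (ℓ i) + penaltyCost T p (b i) (d i) (ℓ i))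

/-- One time step of GPA: eligible sites are processed in index order; site `i` is
eligible if `r i < b i` and `Lprev i ≤ γ i * Dt i`; an eligible site requests
`⌈(b i − r i)/c i⌉` full shipments and receives the min of that and the remaining
hub supply. Returns the remaining supply and the per-site allocation. -/
noncomputable def gpaInner {n : ℕ} (b c : Fin n → ℕ) (γ : Fin n → ℝ)
    (Dt Lprev r : Fin n → ℕ) (rem : ℕ) : ℕ × (Fin n → ℕ) :=
  (List.finRange n).foldl
    (fun (st : ℕ × (Fin n → ℕ)) (i : Fin n) =>
      if r i < b i ∧ (Lprev i : ℝ) ≤ γ i * (Dt i : ℝ) then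
        let q : ℕ := (b i - r i + c i - 1) / c i
        let give : ℕ := min st.1 (c i * q)
        (st.1 - give, Function.update st.2 i give)
      else st)
    (rem, fun _ => 0)

/-- GPA state after `t` time steps: (remaining hub supply, current stocks `k^{t+1}`,
cumulative allocations `L^t`). Initially `(s, b, 0)`. -/
noncomputable def gpaState {n : ℕ} (b c : Fin n → ℕ) (γ : Fin n → ℝ)
    (d : Fin n → ℕ → ℕ) (s : ℕ) : ℕ → ℕ × (Fin n → ℕ) × (Fin n → ℕ)
  | 0 => (s, b, fun _ => 0)
  | t + 1 =>
    let st := gpaState b c γ d s t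
    let r : Fin n → ℕ := fun i => st.2.1 i - d i (t + 1)
    let Dt : Fin n → ℕ := fun i => ∑ u ∈ Icc 1 (t + 1), d i u
    let res := gpaInner b c γ Dt st.2.2 r st.1
    (res.1, fun i => r i + res.2 i, fun i => st.2.2 i + res.2 i)

/-- Cumulative GPA allocation `L_i^t`. -/
noncomputable def gpaL {n : ℕ} (b c : Fin n → ℕ) (γ : Fin n → ℝ)
    (d : Fin n → ℕ → ℕ) (s : ℕ) (i : Fin n) (t : ℕ) : ℕ :=
  (gpaState b c γ d s t).2.2 i

/-- Per-step GPA allocation `ℓ_i^t` (as a real number). -/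
noncomputable def gpaAlloc {n : ℕ} (b c : Fin n → ℕ) (γ : Fin n → ℝ)
    (d : Fin n → ℕ → ℕ) (s : ℕ) (i : Fin n) (t : ℕ) : ℝ :=
  ((gpaL b c γ d s i t - gpaL b c γ d s i (t - 1) : ℕ) : ℝ)


section Aux

variable {n : ℕ}

/-- The fold step used inside `gpaInner`. -/
noncomputable def gstep (b c : Fin n → ℕ) (γ : Fin n → ℝ) (Dt Lprev r : Fin n → ℕ) :
    ℕ × (Fin n → ℕ) → Fin n → ℕ × (Fin n → ℕ) :=
  fun st i =>
    if r i < b i ∧ (Lprev i : ℝ) ≤ γ i * (Dt i : ℝ) then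
      let q : ℕ := (b i - r i + c i - 1) / c i
      let give : ℕ := min st.1 (c i * q)
      (st.1 - give, Function.update st.2 i give)
    else st

lemma gpaInner_eq_foldl (b c : Fin n → ℕ) (γ : Fin n → ℝ) (Dt Lprev r : Fin n → ℕ)
    (rem : ℕ) :
    gpaInner b c γ Dt Lprev r rem =
      (List.finRange n).foldl (gstep b c γ Dt Lprev r) (rem, fun _ => 0) := rfl

lemma gstep_foldl_spec (b c : Fin n → ℕ) (γ : Fin n → ℝ) (Dt Lprev r : Fin n → ℕ)
    (l : List (Fin n)) (st : ℕ × (Fin n → ℕ)) (i : Fin n) :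
    (l.foldl (gstep b c γ Dt Lprev r) st).2 i = st.2 i ∨
    ((Lprev i : ℝ) ≤ γ i * (Dt i : ℝ) ∧
      (l.foldl (gstep b c γ Dt Lprev r) st).2 i ≤ c i * ((b i - r i + c i - 1) / c i)) := by
  induction l generalizing st with
  | nil => left; rfl
  | cons a l ih =>
    simp only [List.foldl_cons]
    rcases ih (gstep b c γ Dt Lprev r st a) with h | h
    · rw [h]
      unfold gstep
      split_ifs with hcond
      · by_cases hai : a = i
        · subst hai
          right
          exact ⟨hcond.2, by simpa using min_le_right st.1 _⟩
        · left
          simp [Function.update_of_ne (Ne.symm hai)]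
      · left; rfl
    · right; exact h

lemma gpaInner_spec (b c : Fin n → ℕ) (γ : Fin n → ℝ) (Dt Lprev r : Fin n → ℕ)
    (rem : ℕ) (i : Fin n) :
    (gpaInner b c γ Dt Lprev r rem).2 i = 0 ∨
    ((Lprev i : ℝ) ≤ γ i * (Dt i : ℝ) ∧
      (gpaInner b c γ Dt Lprev r rem).2 i ≤ b i + c i) := by
  rw [gpaInner_eq_foldl]
  rcases gstep_foldl_spec b c γ Dt Lprev r (List.finRange n) (rem, fun _ => 0) i with h | h
  · left; exact h
  · right
    refine ⟨h.1, h.2.trans ?_⟩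
    calc c i * ((b i - r i + c i - 1) / c i) ≤ b i - r i + c i - 1 := Nat.mul_div_le _ _
      _ ≤ b i + c i := by omega

end Aux

/-- **Upper bound on cumulative allocation under GPA.** For every site `i` and
time `t ∈ {0,…,T}`, the cumulative allocation satisfies
`L_i^t ≤ γ_i·D_i^t + b_i + c_i`; in particular `L_i ≤ γ_i·D_i + b_i + c_i`. -/
theorem gpa_cumulative_upper_bound
    (n T : ℕ) (c b : Fin n → ℕ) (hc : ∀ i, 1 ≤ c i)
    (w : Fin n → ℝ) (hw : ∀ i, 0 ≤ w i)
    (p : ℝ) (hp : 0 ≤ p) (hwp : ∀ i, w i ≤ p * c i)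
    (s : ℕ) (d : Fin n → ℕ → ℕ) (hd : ∀ i, ∀ t ∈ Icc 1 T, d i t ≤ b i)
    (γ : Fin n → ℝ) (hγ : ∀ i, 0 ≤ γ i ∧ γ i ≤ 1)
    :
    (∀ i, ∀ t ≤ T, (gpaL b c γ d s i t : ℝ) ≤
        γ i * ((∑ u ∈ Icc 1 t, d i u : ℕ) : ℝ) + b i + c i) ∧
    (∀ i, (gpaL b c γ d s i T : ℝ) ≤
        γ i * ((∑ u ∈ Icc 1 T, d i u : ℕ) : ℝ) + b i + c i) := by
  have key : ∀ i t, (gpaL b c γ d s i t : ℝ) ≤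
      γ i * ((∑ u ∈ Icc 1 t, d i u : ℕ) : ℝ) + b i + c i := by
    intro i t
    induction t with
    | zero =>
      simp only [gpaL, gpaState, Icc_self, Nat.lt_irrefl]
      simp
      positivity
    | succ t ih =>
      have hγi := (hγ i).1
      set st := gpaState b c γ d s t with hst
      have hL : gpaL b c γ d s i (t + 1) =
          gpaL b c γ d s i t +
          (gpaInner b c γ (fun j => ∑ u ∈ Icc 1 (t + 1), d j u) st.2.2
            (fun j => st.2.1 j - d j (t + 1)) st.1).2 i := rfl
      have hLt : gpaL b c γ d s i t = st.2.2 i := rfl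
      rcases gpaInner_spec b c γ (fun j => ∑ u ∈ Icc 1 (t + 1), d j u) st.2.2
          (fun j => st.2.1 j - d j (t + 1)) st.1 i with h | h
      · rw [hL, h]
        have hmono : (↑(∑ u ∈ Icc 1 t, d i u) : ℝ) ≤ ↑(∑ u ∈ Icc 1 (t + 1), d i u) := by
          exact_mod_cast Finset.sum_le_sum_of_subset
            (Finset.Icc_subset_Icc_right (Nat.le_succ t))
        rw [Nat.cast_add, Nat.cast_zero, add_zero]
        have := mul_le_mul_of_nonneg_left hmono hγi
        linarith
      · rw [hL]
        have h1 : (st.2.2 i : ℝ) ≤ γ i * ((∑ u ∈ Icc 1 (t + 1), d i u : ℕ) : ℝ) := h.1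
        have h2 : ((gpaInner b c γ (fun j => ∑ u ∈ Icc 1 (t + 1), d j u) st.2.2
            (fun j => st.2.1 j - d j (t + 1)) st.1).2 i : ℝ) ≤ (b i : ℝ) + c i := by
          exact_mod_cast h.2
        rw [hLt, Nat.cast_add]
        linarith
  exact ⟨fun i t _ => key i t, fun i => key i T⟩
end

section
/- GPA guarantee when the hub is exhausted: fix τ ∈ (0,1] and a threshold vector γ_1,…,γ_n with γ_i ∈ [0,1] and γ_i ≤ min{1, τ·p·c_i/w_i} for all i (the minimum interpreted as 1 when w_i = 0). Let ℓ be the allocation produced by the GPA policy and suppose s^end = s − Σ_i L_i = 0. Then for every feasible offline allocation ℓ* (nonnegative, with Σ_i Σ_t ℓ*_i^t ≤ s), cost(ℓ) ≤ (1 + τ)·cost(ℓ*) + Σ_{i=1}^n 3p·(b_i + c_i). -/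
/-!
The lost sales of any allocation telescope to `D - b + k - L` (total demand, initial stock,
final stock `k`, total shipped `L`). Since the hub is exhausted, GPA ships `s`, at least as
much as a feasible `ℓs`, and GPA never stocks more than `b + c`; so GPA's penalty exceeds that
of `ℓs` by at most `p (b + c)` per site.

Every round after which supply remains ships only full loads, so GPA's transport is `(w / c) L`
plus one partial round costing at most `Σ w ≤ Σ p c`. The eligibility threshold caps
`L ≤ γ D + b + c`, and `D` is at most `b` plus what `ℓs` ships plus what `ℓs` loses: the
shipped part is paid for by the transport of `ℓs` (at least `w / c` per unit), the lost part
by a `τ` share of its penalty, because `γ w ≤ τ p c`.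
-/

open Finset

theorem mul_ceil_div_le {w : ℝ} (hw : 0 ≤ w) (x c : ℝ) :
    w * ⌈x / c⌉ ≤ w / c * x + w :=
  calc w * ⌈x / c⌉ ≤ w * (x / c + 1) := mul_le_mul_of_nonneg_left (Int.ceil_lt_add_one _).le hw
    _ = w / c * x + w := by ring

theorem mul_ceil_div_of_dvd (w : ℝ) {c k : ℕ} (h : c ∣ k) : w * ⌈(k : ℝ) / c⌉ = w / c * k := by
  obtain ⟨m, rfl⟩ := h
  rcases Nat.eq_zero_or_pos c with rfl | hc
  · simp
  · have hc' : (c : ℝ) ≠ 0 := Nat.cast_ne_zero.2 hc.ne'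
    rw [Nat.cast_mul, mul_div_cancel_left₀ _ hc', Int.ceil_natCast, Int.cast_natCast]
    field_simp

theorem mul_le_of_le_threshold {γ w τ p c : ℝ} (hτ : 0 ≤ τ) (hp : 0 ≤ p) (hw : 0 ≤ w)
    (hc : 0 ≤ c) (h : γ ≤ if w = 0 then 1 else min 1 (τ * p * c / w)) : γ * w ≤ τ * p * c := by
  split_ifs at h with hw0
  · rw [hw0, mul_zero]
    exact mul_nonneg (mul_nonneg hτ hp) hc
  · rw [← le_div_iff₀ (lt_of_le_of_ne hw (Ne.symm hw0))]
    exact h.trans (min_le_right _ _)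

section Site

variable {T : ℕ} {p w : ℝ} {b c : ℕ} {d : ℕ → ℕ} {ℓ : ℕ → ℝ}

theorem natCast_sub_eq_max (k m : ℕ) : ((k - m : ℕ) : ℝ) = max ((k : ℝ) - m) 0 := by
  rcases le_total m k with h | h
  · rw [Nat.cast_sub h, max_eq_left (sub_nonneg.2 (by exact_mod_cast h))]
  · rw [Nat.sub_eq_zero_of_le h, max_eq_right (sub_nonpos.2 (by exact_mod_cast h)), Nat.cast_zero]

theorem stock_nonneg (hℓ : ∀ t ∈ Icc 1 T, 0 ≤ ℓ t) : ∀ t ≤ T, 0 ≤ stock b d ℓ t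
  | 0, _ => Nat.cast_nonneg b
  | t + 1, ht => add_nonneg (le_max_right _ _) (hℓ (t + 1) (mem_Icc.2 ⟨by omega, ht⟩))

theorem transportCost_succ (T : ℕ) (w : ℝ) (c : ℕ) (ℓ : ℕ → ℝ) :
    transportCost (T + 1) w c ℓ = transportCost T w c ℓ + w * ⌈ℓ (T + 1) / c⌉ :=
  sum_Icc_succ_top (by omega) _

theorem penaltyCost_succ (T : ℕ) (p : ℝ) (b : ℕ) (d : ℕ → ℕ) (ℓ : ℕ → ℝ) :
    penaltyCost (T + 1) p b d ℓ
      = penaltyCost T p b d ℓ + p * max ((d (T + 1) : ℝ) - stock b d ℓ T) 0 :=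
  sum_Icc_succ_top (by omega) _

theorem transportCost_nonneg (hw : 0 ≤ w) (hℓ : ∀ t ∈ Icc 1 T, 0 ≤ ℓ t) :
    0 ≤ transportCost T w c ℓ :=
  sum_nonneg fun t ht =>
    mul_nonneg hw (Int.cast_nonneg (Int.ceil_nonneg (div_nonneg (hℓ t ht) c.cast_nonneg)))

theorem div_mul_sum_le_transportCost (hw : 0 ≤ w) :
    w / c * ∑ t ∈ Icc 1 T, ℓ t ≤ transportCost T w c ℓ := by
  rw [mul_sum]
  refine sum_le_sum fun t _ => ?_
  rw [div_mul_comm, mul_comm]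
  exact mul_le_mul_of_nonneg_left (Int.le_ceil _) hw

theorem penaltyCost_eq (T : ℕ) (p : ℝ) (b : ℕ) (d : ℕ → ℕ) (ℓ : ℕ → ℝ) :
    penaltyCost T p b d ℓ
      = p * (∑ t ∈ Icc 1 T, (d t : ℝ) - b + stock b d ℓ T - ∑ t ∈ Icc 1 T, ℓ t) := by
  induction T with
  | zero => simp [penaltyCost, stock]
  | succ T ih =>
    have hmax : max ((d (T + 1) : ℝ) - stock b d ℓ T) 0
        = d (T + 1) - stock b d ℓ T + max (stock b d ℓ T - d (T + 1)) 0 := by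
      rcases le_total (stock b d ℓ T) (d (T + 1)) with h | h <;> simp [h]
    rw [penaltyCost_succ, ih, hmax, sum_Icc_succ_top (by omega), sum_Icc_succ_top (by omega),
      stock]
    ring

theorem penaltyCost_eq_mul (T : ℕ) (p : ℝ) (b : ℕ) (d : ℕ → ℕ) (ℓ : ℕ → ℝ) :
    penaltyCost T p b d ℓ = p * penaltyCost T 1 b d ℓ := by
  rw [penaltyCost_eq, penaltyCost_eq, one_mul]

theorem sum_demand_le (hℓ : ∀ t ∈ Icc 1 T, 0 ≤ ℓ t) :
    ∑ t ∈ Icc 1 T, (d t : ℝ) ≤ b + ∑ t ∈ Icc 1 T, ℓ t + penaltyCost T 1 b d ℓ := by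
  rw [penaltyCost_eq, one_mul]
  linarith [stock_nonneg (b := b) (d := d) hℓ T le_rfl]

theorem div_mul_le_of_le_threshold {τ γ L : ℝ} (hc : 0 < c) (hw : 0 ≤ w) (hwp : w ≤ p * c)
    (hγ0 : 0 ≤ γ) (hγ1 : γ ≤ 1) (hγw : γ * w ≤ τ * p * c) (hℓ : ∀ t ∈ Icc 1 T, 0 ≤ ℓ t)
    (hL : L ≤ γ * ∑ t ∈ Icc 1 T, (d t : ℝ) + b + c) :
    w / c * L ≤ transportCost T w c ℓ + τ * penaltyCost T p b d ℓ + p * (2 * b + c) := by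
  have hc' : (0 : ℝ) < c := Nat.cast_pos.2 hc
  have hrate0 : 0 ≤ w / c := div_nonneg hw hc'.le
  have hrate : w / c ≤ p := (div_le_iff₀ hc').2 hwp
  have hγrate : γ * (w / c) ≤ τ * p := by rw [← mul_div_assoc, div_le_iff₀ hc']; exact hγw
  have hγrate' : γ * (w / c) ≤ p := (mul_le_of_le_one_left hrate0 hγ1).trans hrate
  have hlost : 0 ≤ penaltyCost T 1 b d ℓ :=
    sum_nonneg fun t _ => mul_nonneg zero_le_one (le_max_right _ _)
  have hγLs : γ * (w / c * ∑ t ∈ Icc 1 T, ℓ t) ≤ w / c * ∑ t ∈ Icc 1 T, ℓ t :=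
    mul_le_of_le_one_left (mul_nonneg hrate0 (sum_nonneg hℓ)) hγ1
  rw [penaltyCost_eq_mul]
  linarith [mul_le_mul_of_nonneg_left hL hrate0,
    mul_le_mul_of_nonneg_left (sum_demand_le (b := b) (d := d) hℓ) (mul_nonneg hγ0 hrate0),
    div_mul_sum_le_transportCost (T := T) (c := c) (ℓ := ℓ) hw,
    mul_le_mul_of_nonneg_right hγrate hlost, mul_le_mul_of_nonneg_right hγrate' b.cast_nonneg,
    mul_le_mul_of_nonneg_right hrate (add_nonneg b.cast_nonneg c.cast_nonneg)]

end Site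

section Round

variable {n : ℕ} {b c : Fin n → ℕ} {γ : Fin n → ℝ} {Dt Lprev r : Fin n → ℕ}

theorem gpaInner_fst_le (rem : ℕ) : (gpaInner b c γ Dt Lprev r rem).1 ≤ rem := by
  unfold gpaInner
  refine List.foldlRecOn (motive := fun st : ℕ × (Fin n → ℕ) => st.1 ≤ rem) _ _ le_rfl
    fun st h i _ => ?_
  dsimp only
  split_ifs <;> omega

theorem gpaInner_snd_eq_zero_of_rem_eq_zero (i : Fin n) :
    (gpaInner b c γ Dt Lprev r 0).2 i = 0 := by
  unfold gpaInner
  refine congrFun (List.foldlRecOn (motive := fun st : ℕ × (Fin n → ℕ) => st.1 = 0 ∧ st.2 = 0)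
    _ _ ?_ fun st h j _ => ?_).2 i
  · exact ⟨rfl, rfl⟩
  dsimp only
  split_ifs
  · simp [h.1, h.2]
  · exact h

theorem dvd_gpaInner_snd_of_fst_ne_zero (rem : ℕ) (h : (gpaInner b c γ Dt Lprev r rem).1 ≠ 0)
    (i : Fin n) : c i ∣ (gpaInner b c γ Dt Lprev r rem).2 i := by
  revert h i
  unfold gpaInner
  refine List.foldlRecOn (motive := fun st : ℕ × (Fin n → ℕ) => st.1 ≠ 0 → ∀ i, c i ∣ st.2 i)
    _ _ (fun _ _ => dvd_zero _) fun st h j _ => ?_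
  dsimp only
  split_ifs
  · intro hrem i
    have hfull : min st.1 (c j * ((b j - r j + c j - 1) / c j))
        = c j * ((b j - r j + c j - 1) / c j) := min_eq_right (by omega)
    rcases eq_or_ne i j with rfl | hij
    · simp [hfull]
    · simpa [hij] using h (by omega) i
  · exact h

theorem gpaInner_snd_spec (rem : ℕ) (i : Fin n) (h : (gpaInner b c γ Dt Lprev r rem).2 i ≠ 0) :
    (Lprev i : ℝ) ≤ γ i * Dt i ∧ r i + (gpaInner b c γ Dt Lprev r rem).2 i < b i + c i := by
  revert h i
  unfold gpaInner
  refine List.foldlRecOn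
    (motive := fun st : ℕ × (Fin n → ℕ) =>
      ∀ i, st.2 i ≠ 0 → (Lprev i : ℝ) ≤ γ i * Dt i ∧ r i + st.2 i < b i + c i)
    _ _ (fun _ h => absurd rfl h) fun st h j _ => ?_
  dsimp only
  split_ifs with hj
  · intro i hi
    rcases eq_or_ne i j with rfl | hij
    · have := Nat.mul_div_le (b i - r i + c i - 1) (c i)
      simp only [Function.update_self] at hi ⊢
      exact ⟨hj.2, by omega⟩
    · simpa [hij] using h i (by simpa [hij] using hi)
  · exact h

end Round

section Dynamics

variable {n : ℕ} (b c : Fin n → ℕ) (γ : Fin n → ℝ) (d : Fin n → ℕ → ℕ) (s : ℕ)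

/-- The remaining supply and the per-site allocations `ℓ^{t+1}` of round `t + 1`. -/
noncomputable def gpaRound (t : ℕ) : ℕ × (Fin n → ℕ) :=
  gpaInner b c γ (fun i => ∑ u ∈ Icc 1 (t + 1), d i u) (gpaState b c γ d s t).2.2
    (fun i => (gpaState b c γ d s t).2.1 i - d i (t + 1)) (gpaState b c γ d s t).1

theorem gpaL_succ (i : Fin n) (t : ℕ) :
    gpaL b c γ d s i (t + 1) = gpaL b c γ d s i t + (gpaRound b c γ d s t).2 i :=
  rfl

theorem gpaAlloc_succ (i : Fin n) (t : ℕ) :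
    gpaAlloc b c γ d s i (t + 1) = (gpaRound b c γ d s t).2 i := by
  rw [gpaAlloc, Nat.add_sub_cancel, gpaL_succ, Nat.add_sub_cancel_left]

theorem gpaState_succ_fst_le (t : ℕ) :
    (gpaState b c γ d s (t + 1)).1 ≤ (gpaState b c γ d s t).1 :=
  gpaInner_fst_le _

theorem gpaRound_snd_eq_zero (t : ℕ) (h : (gpaState b c γ d s t).1 = 0) (i : Fin n) :
    (gpaRound b c γ d s t).2 i = 0 := by
  rw [gpaRound, h]
  exact gpaInner_snd_eq_zero_of_rem_eq_zero i

theorem dvd_gpaRound_snd (t : ℕ) (h : (gpaState b c γ d s (t + 1)).1 ≠ 0) (i : Fin n) :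
    c i ∣ (gpaRound b c γ d s t).2 i :=
  dvd_gpaInner_snd_of_fst_ne_zero _ h i

theorem gpaRound_snd_spec (t : ℕ) (i : Fin n) (h : (gpaRound b c γ d s t).2 i ≠ 0) :
    (gpaL b c γ d s i t : ℝ) ≤ γ i * ∑ u ∈ Icc 1 (t + 1), (d i u : ℝ)
      ∧ (gpaState b c γ d s t).2.1 i - d i (t + 1) + (gpaRound b c γ d s t).2 i < b i + c i := by
  have := gpaInner_snd_spec _ i h
  push_cast at this
  exact this

theorem stock_gpaAlloc (i : Fin n) :
    ∀ t, stock (b i) (d i) (gpaAlloc b c γ d s i) t = (gpaState b c γ d s t).2.1 i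
  | 0 => rfl
  | t + 1 => by
    rw [stock, stock_gpaAlloc i t, gpaAlloc_succ, ← natCast_sub_eq_max, ← Nat.cast_add]
    rfl

theorem gpaState_stock_le (i : Fin n) : ∀ t, (gpaState b c γ d s t).2.1 i ≤ b i + c i
  | 0 => Nat.le_add_right _ _
  | t + 1 => by
    have ih := gpaState_stock_le i t
    change _ - d i (t + 1) + (gpaRound b c γ d s t).2 i ≤ b i + c i
    by_cases h : (gpaRound b c γ d s t).2 i = 0
    · omega
    · exact (gpaRound_snd_spec b c γ d s t i h).2.le

theorem gpaL_le (i : Fin n) (hγ : 0 ≤ γ i) :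
    ∀ t, (gpaL b c γ d s i t : ℝ) ≤ γ i * ∑ u ∈ Icc 1 t, (d i u : ℝ) + b i + c i
  | 0 => by simp [gpaL, gpaState]; positivity
  | t + 1 => by
    rw [gpaL_succ, Nat.cast_add]
    by_cases h : (gpaRound b c γ d s t).2 i = 0
    · rw [h, Nat.cast_zero, add_zero, sum_Icc_succ_top (by omega)]
      linarith [gpaL_le i hγ t, mul_nonneg hγ (d i (t + 1)).cast_nonneg]
    · obtain ⟨heligible, hship⟩ := gpaRound_snd_spec b c γ d s t i h
      have : ((gpaRound b c γ d s t).2 i : ℝ) < b i + c i := by exact_mod_cast (by omega)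
      linarith

theorem sum_gpaAlloc (i : Fin n) (T : ℕ) :
    ∑ t ∈ Icc 1 T, gpaAlloc b c γ d s i t = gpaL b c γ d s i T := by
  induction T with
  | zero => simp [gpaL, gpaState]
  | succ T ih => rw [sum_Icc_succ_top (by omega), ih, gpaAlloc_succ, gpaL_succ, Nat.cast_add]

end Dynamics

section Costs

variable {n : ℕ} (b c : Fin n → ℕ) {w : Fin n → ℝ} (γ : Fin n → ℝ) (d : Fin n → ℕ → ℕ) (s : ℕ)

theorem sum_mul_ceil_gpaRound_le (hw : ∀ i, 0 ≤ w i) (t : ℕ) :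
    ∑ i, w i * ⌈((gpaRound b c γ d s t).2 i : ℝ) / c i⌉
      ≤ ∑ i, w i / c i * (gpaRound b c γ d s t).2 i
        + if (gpaState b c γ d s (t + 1)).1 = 0 then ∑ i, w i else 0 := by
  split_ifs with h
  · rw [← sum_add_distrib]
    exact sum_le_sum fun i _ => mul_ceil_div_le (hw i) _ _
  · rw [add_zero]
    exact (sum_congr rfl fun i _ =>
      mul_ceil_div_of_dvd (w i) (dvd_gpaRound_snd b c γ d s t h i)).le

theorem sum_transportCost_gpaAlloc_le_add_ite (hw : ∀ i, 0 ≤ w i) :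
    ∀ T, ∑ i, transportCost T (w i) (c i) (gpaAlloc b c γ d s i)
      ≤ ∑ i, w i / c i * gpaL b c γ d s i T
        + if (gpaState b c γ d s T).1 = 0 then ∑ i, w i else 0
  | 0 => by
    have := sum_nonneg fun i (_ : i ∈ univ) => hw i
    simp only [transportCost]
    split_ifs <;> simp [gpaL, gpaState, this]
  | T + 1 => by
    have ih := sum_transportCost_gpaAlloc_le_add_ite hw T
    simp only [transportCost_succ, sum_add_distrib, gpaAlloc_succ, gpaL_succ, Nat.cast_add,
      mul_add]
    by_cases h0 : (gpaState b c γ d s T).1 = 0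
    · have h1 : (gpaState b c γ d s (T + 1)).1 = 0 :=
        Nat.le_zero.1 (h0 ▸ gpaState_succ_fst_le b c γ d s T)
      simpa [gpaRound_snd_eq_zero b c γ d s T h0, h0, h1] using ih
    · rw [if_neg h0, add_zero] at ih
      linarith [sum_mul_ceil_gpaRound_le b c γ d s hw T]

theorem sum_transportCost_gpaAlloc_le (hw : ∀ i, 0 ≤ w i) (T : ℕ) :
    ∑ i, transportCost T (w i) (c i) (gpaAlloc b c γ d s i)
      ≤ ∑ i, (w i / c i * gpaL b c γ d s i T + w i) := by
  refine (sum_transportCost_gpaAlloc_le_add_ite b c γ d s hw T).trans ?_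
  rw [sum_add_distrib]
  split_ifs
  · exact le_rfl
  · linarith [sum_nonneg fun i (_ : i ∈ univ) => hw i]

theorem sum_penaltyCost_gpaAlloc_le {T : ℕ} {p : ℝ} (hp : 0 ≤ p)
    (hend : ∑ i, gpaL b c γ d s i T = s) {ℓs : Fin n → ℕ → ℝ}
    (hℓs : ∀ i, ∀ t ∈ Icc 1 T, 0 ≤ ℓs i t) (hfeas : ∑ i, ∑ t ∈ Icc 1 T, ℓs i t ≤ (s : ℝ)) :
    ∑ i, penaltyCost T p (b i) (d i) (gpaAlloc b c γ d s i)
      ≤ ∑ i, (penaltyCost T p (b i) (d i) (ℓs i) + p * (b i + c i)) := by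
  have hL : ∑ i, (gpaL b c γ d s i T : ℝ) = s := by exact_mod_cast hend
  have hbalance : ∑ i, (stock (b i) (d i) (gpaAlloc b c γ d s i) T - gpaL b c γ d s i T)
      ≤ ∑ i, (stock (b i) (d i) (ℓs i) T - ∑ t ∈ Icc 1 T, ℓs i t + (b i + c i)) := by
    have hstock : ∑ i, stock (b i) (d i) (gpaAlloc b c γ d s i) T
        ≤ ∑ i, (b i : ℝ) + ∑ i, (c i : ℝ) := by
      rw [← sum_add_distrib]
      refine sum_le_sum fun i _ => ?_
      rw [stock_gpaAlloc]
      exact_mod_cast gpaState_stock_le b c γ d s i T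
    simp only [sum_sub_distrib, sum_add_distrib, hL]
    linarith [sum_nonneg fun i (_ : i ∈ univ) =>
      stock_nonneg (b := b i) (d := d i) (hℓs i) T le_rfl]
  calc ∑ i, penaltyCost T p (b i) (d i) (gpaAlloc b c γ d s i)
      = ∑ i, (p * (∑ t ∈ Icc 1 T, (d i t : ℝ) - b i)
          + p * (stock (b i) (d i) (gpaAlloc b c γ d s i) T - gpaL b c γ d s i T)) :=
        sum_congr rfl fun i _ => by rw [penaltyCost_eq, sum_gpaAlloc]; ring
    _ ≤ ∑ i, (p * (∑ t ∈ Icc 1 T, (d i t : ℝ) - b i)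
          + p * (stock (b i) (d i) (ℓs i) T - ∑ t ∈ Icc 1 T, ℓs i t + (b i + c i))) := by
        rw [sum_add_distrib, sum_add_distrib, ← mul_sum, ← mul_sum, ← mul_sum]
        gcongr
    _ = ∑ i, (penaltyCost T p (b i) (d i) (ℓs i) + p * (b i + c i)) :=
        sum_congr rfl fun i _ => by rw [penaltyCost_eq]; ring

end Costs

theorem gpa_guarantee_exhausted_general
    (n T : ℕ) (c b : Fin n → ℕ) (hc : ∀ i, 1 ≤ c i)
    (w : Fin n → ℝ) (hw : ∀ i, 0 ≤ w i)
    (p : ℝ) (hp : 0 ≤ p) (hwp : ∀ i, w i ≤ p * c i)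
    (s : ℕ) (d : Fin n → ℕ → ℕ)
    (τ : ℝ) (hτ0 : 0 < τ)
    (γ : Fin n → ℝ) (hγ : ∀ i, 0 ≤ γ i ∧ γ i ≤ 1)
    (hγub : ∀ i, γ i ≤ (if w i = 0 then (1 : ℝ) else min 1 (τ * p * c i / w i)))
    (ℓ : Fin n → ℕ → ℝ) (hℓ : ℓ = fun i t => gpaAlloc b c γ d s i t)
    (hend : (∑ i, gpaL b c γ d s i T) = s)
    (ℓs : Fin n → ℕ → ℝ) (hℓs : ∀ i, ∀ t ∈ Icc 1 T, 0 ≤ ℓs i t)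
    (hfeas : ∑ i, ∑ t ∈ Icc 1 T, ℓs i t ≤ (s : ℝ))
    :
    totalCost T w c b p d ℓ
      ≤ (1 + τ) * totalCost T w c b p d ℓs
        + ∑ i, 3 * p * ((b i : ℝ) + c i) := by
  subst hℓ
  have hsite : ∀ i, w i / c i * gpaL b c γ d s i T ≤ transportCost T (w i) (c i) (ℓs i)
      + τ * penaltyCost T p (b i) (d i) (ℓs i) + p * (2 * b i + c i) := fun i =>
    div_mul_le_of_le_threshold (hc i) (hw i) (hwp i) (hγ i).1 (hγ i).2
      (mul_le_of_le_threshold hτ0.le hp (hw i) (c i).cast_nonneg (hγub i)) (hℓs i)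
      (gpaL_le b c γ d s i (hγ i).1 T)
  calc totalCost T w c b p d (fun i t => gpaAlloc b c γ d s i t)
      = ∑ i, transportCost T (w i) (c i) (gpaAlloc b c γ d s i)
        + ∑ i, penaltyCost T p (b i) (d i) (gpaAlloc b c γ d s i) := sum_add_distrib
    _ ≤ ∑ i, (w i / c i * gpaL b c γ d s i T + w i)
        + ∑ i, (penaltyCost T p (b i) (d i) (ℓs i) + p * (b i + c i)) :=
      add_le_add (sum_transportCost_gpaAlloc_le b c γ d s hw T)
        (sum_penaltyCost_gpaAlloc_le b c γ d s hp hend hℓs hfeas)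
    _ ≤ ∑ i, ((1 + τ) * (transportCost T (w i) (c i) (ℓs i)
          + penaltyCost T p (b i) (d i) (ℓs i)) + 3 * p * ((b i : ℝ) + c i)) := by
      rw [← sum_add_distrib]
      refine sum_le_sum fun i _ => ?_
      linarith [hsite i, hwp i, mul_nonneg hτ0.le (transportCost_nonneg (c := c i) (hw i) (hℓs i))]
    _ = _ := by rw [totalCost, mul_sum, sum_add_distrib]

/-- **GPA guarantee when the hub is exhausted.** Fix `τ ∈ (0,1]` and thresholds
with `γ i ≤ min{1, τ·p·c_i/w_i}` (interpreted as `1` when `w i = 0`). If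
`s^end = 0`, then for every feasible offline allocation `ℓ*`,
`cost(ℓ) ≤ (1 + τ)·cost(ℓ*) + Σ_i 3p(b_i + c_i)`. -/
theorem gpa_guarantee_exhausted
    (n T : ℕ) (c b : Fin n → ℕ) (hc : ∀ i, 1 ≤ c i)
    (w : Fin n → ℝ) (hw : ∀ i, 0 ≤ w i)
    (p : ℝ) (hp : 0 ≤ p) (hwp : ∀ i, w i ≤ p * c i)
    (s : ℕ) (d : Fin n → ℕ → ℕ) (hd : ∀ i, ∀ t ∈ Icc 1 T, d i t ≤ b i)
    (τ : ℝ) (hτ0 : 0 < τ) (hτ1 : τ ≤ 1)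
    (γ : Fin n → ℝ) (hγ : ∀ i, 0 ≤ γ i ∧ γ i ≤ 1)
    (hγub : ∀ i, γ i ≤ (if w i = 0 then (1 : ℝ) else min 1 (τ * p * c i / w i)))
    (ℓ : Fin n → ℕ → ℝ) (hℓ : ℓ = fun i t => gpaAlloc b c γ d s i t)
    (hend : (∑ i, gpaL b c γ d s i T) = s)
    (ℓs : Fin n → ℕ → ℝ) (hℓs : ∀ i, ∀ t ∈ Icc 1 T, 0 ≤ ℓs i t)
    (hfeas : ∑ i, ∑ t ∈ Icc 1 T, ℓs i t ≤ (s : ℝ))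
    :
    totalCost T w c b p d ℓ
      ≤ (1 + τ) * totalCost T w c b p d ℓs
        + ∑ i, 3 * p * ((b i : ℝ) + c i) :=
  gpa_guarantee_exhausted_general n T c b hc w hw p hp hwp s d τ hτ0 γ hγ hγub ℓ hℓ hend ℓs hℓs
    hfeas
end

section
/- Supply-perturbation stability of the greedy prefix allocation: let n ∈ ℕ, let N_1,…,N_n ≥ 0 be real numbers, and let s, ŝ ≥ 0 be real numbers. Define the prefix allocation A_i(u) = min{ N_i, (u − Σ_{j=1}^{i−1} N_j)_+ } for u ≥ 0 and i = 1,…,n, where (x)_+ = max{x,0}. Then Σ_{i=1}^n |A_i(s) − A_i(ŝ)| ≤ |s − ŝ|. -/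
open Finset

private lemma key_split (a p u : ℝ) (ha : 0 ≤ a) (hp : 0 ≤ p) :
    min a (max (u - p) 0) = min u (p + a) - min u p := by
  simp only [min_def, max_def]
  split_ifs <;> linarith

private lemma alloc_mono (a p u v : ℝ) (huv : u ≤ v) :
    min a (max (u - p) 0) ≤ min a (max (v - p) 0) :=
  min_le_min le_rfl (max_le_max (by linarith) le_rfl)

private lemma range_version (n : ℕ) (g : ℕ → ℝ) (hg : ∀ i, 0 ≤ g i)
    (s t : ℝ) (ht : 0 ≤ t) (hts : t ≤ s) :
    ∑ i ∈ Finset.range n, |min (g i) (max (s - ∑ j ∈ Finset.range i, g j) 0)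
      - min (g i) (max (t - ∑ j ∈ Finset.range i, g j) 0)| ≤ s - t := by
  have hP : ∀ k, 0 ≤ ∑ j ∈ Finset.range k, g j := fun k =>
    Finset.sum_nonneg fun j _ => hg j
  have habs : ∀ i ∈ Finset.range n,
      |min (g i) (max (s - ∑ j ∈ Finset.range i, g j) 0)
        - min (g i) (max (t - ∑ j ∈ Finset.range i, g j) 0)|
      = min (g i) (max (s - ∑ j ∈ Finset.range i, g j) 0)
        - min (g i) (max (t - ∑ j ∈ Finset.range i, g j) 0) := fun i _ =>
    abs_of_nonneg (by linarith [alloc_mono (g i) (∑ j ∈ Finset.range i, g j) t s hts])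
  rw [Finset.sum_congr rfl habs]
  have hrw : ∀ i ∈ Finset.range n,
      min (g i) (max (s - ∑ j ∈ Finset.range i, g j) 0)
        - min (g i) (max (t - ∑ j ∈ Finset.range i, g j) 0)
      = (min s (∑ j ∈ Finset.range (i+1), g j) - min t (∑ j ∈ Finset.range (i+1), g j))
        - (min s (∑ j ∈ Finset.range i, g j) - min t (∑ j ∈ Finset.range i, g j)) := by
    intro i _
    rw [key_split (g i) _ s (hg i) (hP i), key_split (g i) _ t (hg i) (hP i),
      Finset.sum_range_succ]
    ring
  rw [Finset.sum_congr rfl hrw,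
    Finset.sum_range_sub (fun k => min s (∑ j ∈ Finset.range k, g j)
      - min t (∑ j ∈ Finset.range k, g j))]
  simp only [Finset.range_zero, Finset.sum_empty]
  rw [min_eq_right ht, min_eq_right (le_trans ht hts)]
  rcases le_total s (∑ j ∈ Finset.range n, g j) with h | h
  · rw [min_eq_left h, min_eq_left (by linarith)]; linarith
  · rw [min_eq_right h]
    rcases le_total t (∑ j ∈ Finset.range n, g j) with h' | h'
    · rw [min_eq_left h']; linarith
    · rw [min_eq_right h']; linarith

private lemma fin_to_range (n : ℕ) (N : Fin n → ℝ)
    (s t : ℝ) :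
    ∑ i, |min (N i) (max (s - ∑ j ∈ Iio i, N j) 0)
          - min (N i) (max (t - ∑ j ∈ Iio i, N j) 0)|
    = ∑ i ∈ Finset.range n,
        |min ((fun k => if h : k < n then N ⟨k, h⟩ else 0) i)
          (max (s - ∑ j ∈ Finset.range i, (fun k => if h : k < n then N ⟨k, h⟩ else 0) j) 0)
        - min ((fun k => if h : k < n then N ⟨k, h⟩ else 0) i)
          (max (t - ∑ j ∈ Finset.range i, (fun k => if h : k < n then N ⟨k, h⟩ else 0) j) 0)| := by
  rw [Finset.sum_range]
  refine Finset.sum_congr rfl fun i _ => ?_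
  have hinner : ∑ j ∈ Iio i, N j
      = ∑ j ∈ Finset.range i.val, (fun k => if h : k < n then N ⟨k, h⟩ else 0) j := by
    rw [Finset.sum_range]
    refine Finset.sum_bij' (i := fun (j : Fin n) (hj : j ∈ Iio i) =>
        (⟨j.val, Fin.lt_def.mp (Finset.mem_Iio.mp hj)⟩ : Fin i.val))
      (j := fun (j : Fin i.val) _ => (⟨j.val, j.2.trans i.2⟩ : Fin n)) ?_ ?_ ?_ ?_ ?_
    · intro j hj; exact Finset.mem_univ _
    · intro j _; exact Finset.mem_Iio.mpr j.2
    · intro j hj; rfl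
    · intro j _; rfl
    · intro j hj
      simp
  simp only [dif_pos i.2, hinner]

/-- **Supply-perturbation stability of the greedy prefix allocation.** With
`A_i(u) = min{N_i, (u − Σ_{j<i} N_j)_+}`, one has
`Σ_i |A_i(s) − A_i(ŝ)| ≤ |s − ŝ|`. -/
theorem prefix_allocation_supply_stability (n : ℕ)
    (N : Fin n → ℝ) (hN : ∀ i, 0 ≤ N i)
    (s shat : ℝ) (hs : 0 ≤ s) (hshat : 0 ≤ shat) :
    ∑ i, |min (N i) (max (s - ∑ j ∈ Iio i, N j) 0)
          - min (N i) (max (shat - ∑ j ∈ Iio i, N j) 0)| ≤ |s - shat| := by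
  set g : ℕ → ℝ := fun k => if h : k < n then N ⟨k, h⟩ else 0 with hg
  have hgpos : ∀ i, 0 ≤ g i := by
    intro i; simp only [hg]; split
    · exact hN _
    · exact le_rfl
  rcases le_total shat s with h | h
  · rw [abs_of_nonneg (by linarith), fin_to_range]
    exact range_version n g hgpos s shat hshat h
  · rw [abs_of_nonpos (by linarith)]
    have := range_version n g hgpos shat s hs h
    calc ∑ i, |min (N i) (max (s - ∑ j ∈ Iio i, N j) 0)
          - min (N i) (max (shat - ∑ j ∈ Iio i, N j) 0)|
        = ∑ i, |min (N i) (max (shat - ∑ j ∈ Iio i, N j) 0)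
          - min (N i) (max (s - ∑ j ∈ Iio i, N j) 0)| := by
          refine Finset.sum_congr rfl fun i _ => abs_sub_comm _ _
      _ ≤ shat - s := by rw [fin_to_range]; exact this
      _ = -(s - shat) := by ring
end
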